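/- arXiv:2006.14527 — 2 statements merged into one kernel-verified Lean document; each statement's English description precedes it below -/
import Mathlib

section
/- Let H be a critical 3-hypergraph with |V(H)| ≥ 5. If v ∈ V(H) has degree 1 in the primality graph 𝒫(H), then V(H) \ ({v} ∪ N_{𝒫(H)}(v)) is a module of H − v. -/
/-- `M` is a module of the hypergraph with vertex set `verts` and edge set `edges`. -/
def IsModule {α : Type*} [DecidableEq α] (verts : Finset α) (edges : Set (Finset α))
    (M : Finset α) : Prop :=
  M ⊆ verts ∧ ∀ e ∈ edges, (e ∩ M).Nonempty → (e \ M).Nonempty →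
    ∃ m ∈ M, e ∩ M = {m} ∧ ∀ n ∈ M, (e \ {m}) ∪ {n} ∈ edges

/-- `(verts, edges)` is a hypergraph: edges are nonempty subsets of `verts`. -/
def IsHypergraph {α : Type*} (verts : Finset α) (edges : Set (Finset α)) : Prop :=
  ∀ e ∈ edges, e ⊆ verts ∧ e.Nonempty

/-- `(verts, edges)` is a 3-hypergraph: edges are 3-element subsets of `verts`. -/
def Is3Hypergraph {α : Type*} (verts : Finset α) (edges : Set (Finset α)) : Prop :=
  ∀ e ∈ edges, e ⊆ verts ∧ e.card = 3

/-- Edges of the subhypergraph induced by `W`. -/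
def induceEdges {α : Type*} (W : Finset α) (edges : Set (Finset α)) : Set (Finset α) :=
  {e ∈ edges | e ⊆ W}

/-- A hypergraph is prime if it has at least 3 vertices and all its modules are trivial. -/
def IsPrime {α : Type*} [DecidableEq α] (verts : Finset α) (edges : Set (Finset α)) : Prop :=
  3 ≤ verts.card ∧ ∀ M, IsModule verts edges M → M = ∅ ∨ M = verts ∨ ∃ v, M = {v}

/-- A prime hypergraph is critical if removing any vertex destroys primality. -/
def IsCritical {α : Type*} [DecidableEq α] (verts : Finset α) (edges : Set (Finset α)) : Prop :=
  IsPrime verts edges ∧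
    ∀ v ∈ verts, ¬ IsPrime (verts.erase v) (induceEdges (verts.erase v) edges)

/-- Adjacency in the primality graph: `v ≠ w` and `H - {v, w}` is prime. -/
def PrimAdj {α : Type*} [DecidableEq α] (verts : Finset α) (edges : Set (Finset α))
    (v w : α) : Prop :=
  v ≠ w ∧ v ∈ verts ∧ w ∈ verts ∧
    IsPrime (verts \ {v, w}) (induceEdges (verts \ {v, w}) edges)

/-!
Since `H` is critical, `H - v` has a nontrivial module `M`. Its trace on `H - {v, w}`, which is
prime, is trivial, so `M` is either `V(H) \ {v, w}` or a pair `{w, x}`. In the second case the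
transposition of `w` and `x` is an automorphism of `H - v` (every edge has three vertices), so it
maps `H - {v, x}` isomorphically onto the prime hypergraph `H - {v, w}`: then `x ≠ w` is a
second neighbour of `v` in the primality graph.
-/

namespace Finset

variable {α : Type*} [DecidableEq α]

theorem map_swap_eq_self {s : Finset α} {w x : α} (h : w ∈ s ↔ x ∈ s) :
    s.map (Equiv.swap w x).toEmbedding = s := by
  ext a
  simp only [mem_map_equiv, Equiv.symm_swap]
  rcases eq_or_ne a w with rfl | haw
  · simpa using h.symm
  rcases eq_or_ne a x with rfl | hax
  · simpa using h
  rw [Equiv.swap_apply_of_ne_of_ne haw hax]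

theorem map_swap_of_mem_of_notMem {s : Finset α} {w x : α} (hw : w ∈ s) (hx : x ∉ s) :
    s.map (Equiv.swap w x).toEmbedding = s \ {w} ∪ {x} := by
  apply coe_injective
  push_cast
  rw [Equiv.coe_toEmbedding, Equiv.image_swap_of_mem_of_notMem hw hx]
  grind

theorem map_swap_erase {s : Finset α} {w x : α} (hw : w ∈ s) (hx : x ∈ s) :
    (s.erase x).map (Equiv.swap w x).toEmbedding = s.erase w := by
  rw [map_erase, Equiv.toEmbedding_apply, Equiv.swap_apply_right, map_perm]
  intro a ha
  rcases Equiv.swap_apply_ne_self_iff.1 ha with ⟨-, rfl | rfl⟩ <;> assumption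

end Finset

open Finset

section Modules

variable {α β : Type*} [DecidableEq α] [DecidableEq β] {V M : Finset α} {E : Set (Finset α)}

omit [DecidableEq α] in
theorem induceEdges_induceEdges {W : Finset α} (E : Set (Finset α)) (h : W ⊆ V) :
    induceEdges W (induceEdges V E) = induceEdges W E := by
  ext e
  exact ⟨fun ⟨⟨he, _⟩, heW⟩ => ⟨he, heW⟩, fun ⟨he, heW⟩ => ⟨⟨he, heW.trans h⟩, heW⟩⟩

theorem IsModule.inter_induceEdges (hM : IsModule V E M) (W : Finset α) :
    IsModule W (induceEdges W E) (M ∩ W) := by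
  refine ⟨inter_subset_right, fun e ⟨he, heW⟩ hmeet hout => ?_⟩
  have hinter : e ∩ (M ∩ W) = e ∩ M := by grind
  have hsdiff : e \ (M ∩ W) = e \ M := by grind
  rw [hinter] at hmeet ⊢
  rw [hsdiff] at hout
  obtain ⟨m, hm, hem, hswap⟩ := hM.2 e he hmeet hout
  have hme : m ∈ e := mem_of_mem_inter_left (hem ▸ mem_singleton_self m)
  refine ⟨m, mem_inter.2 ⟨hm, heW hme⟩, hem, fun n hn => ⟨hswap n (mem_inter.1 hn).1, ?_⟩⟩
  exact union_subset (sdiff_subset.trans heW) (singleton_subset_iff.2 (mem_inter.1 hn).2)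

theorem IsModule.map (σ : α ≃ β) {E' : Set (Finset β)}
    (hE : ∀ e, e ∈ E ↔ e.map σ.toEmbedding ∈ E') (hM : IsModule V E M) :
    IsModule (V.map σ.toEmbedding) E' (M.map σ.toEmbedding) := by
  refine ⟨map_subset_map.2 hM.1, fun e he hmeet hout => ?_⟩
  obtain ⟨f, rfl⟩ : ∃ f, f.map σ.toEmbedding = e :=
    ⟨σ.finsetCongr.symm e, σ.finsetCongr.apply_symm_apply e⟩
  rw [← Finset.map_inter, map_nonempty] at hmeet
  rw [← Finset.map_sdiff, map_nonempty] at hout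
  obtain ⟨m, hm, hfm, hswap⟩ := hM.2 f ((hE f).2 he) hmeet hout
  refine ⟨σ m, mem_map_of_mem _ hm, by rw [← Finset.map_inter, hfm, map_singleton]; rfl, ?_⟩
  intro n' hn'
  obtain ⟨n, hn, rfl⟩ := mem_map.1 hn'
  simpa [Finset.map_union, Finset.map_sdiff] using (hE _).1 (hswap n hn)

theorem IsPrime.of_map (σ : α ≃ β) {E' : Set (Finset β)}
    (hE : ∀ e, e ∈ E ↔ e.map σ.toEmbedding ∈ E') (h : IsPrime (V.map σ.toEmbedding) E') :
    IsPrime V E := by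
  refine ⟨by simpa using h.1, fun M hM => ?_⟩
  rcases h.2 _ (hM.map σ hE) with h0 | hV | ⟨u, hu⟩
  · exact Or.inl (map_eq_empty.1 h0)
  · exact Or.inr (Or.inl (map_injective _ hV))
  · exact Or.inr (Or.inr ⟨σ.symm u, map_injective σ.toEmbedding (by simp [hu])⟩)

theorem IsPrime.induceEdges_of_perm (σ : Equiv.Perm α)
    (hE : ∀ e, e ∈ E ↔ e.map σ.toEmbedding ∈ E)
    (h : IsPrime (V.map σ.toEmbedding) (induceEdges (V.map σ.toEmbedding) E)) :
    IsPrime V (induceEdges V E) :=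
  h.of_map σ fun e => by simp only [induceEdges, Set.mem_ofPred_eq, hE e, map_subset_map]

theorem exists_nontrivial_module_of_not_isPrime (hV : 3 ≤ V.card) (h : ¬IsPrime V E) :
    ∃ M, IsModule V E M ∧ M ≠ ∅ ∧ M ≠ V ∧ ∀ u, M ≠ {u} := by
  simpa [IsPrime, hV] using h

theorem IsModule.eq_erase_or_eq_pair {w : α} (hM : IsModule V E M) (hw : w ∈ V)
    (hprime : IsPrime (V.erase w) (induceEdges (V.erase w) E))
    (hne : M ≠ ∅) (hV : M ≠ V) (hsingle : ∀ u, M ≠ {u}) :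
    M = V.erase w ∨ ∃ x ∈ V, x ≠ w ∧ M = {w, x} := by
  have hrestrict := hM.inter_induceEdges (V.erase w)
  rw [inter_erase, inter_eq_left.2 hM.1] at hrestrict
  rcases hprime.2 _ hrestrict with h | h | ⟨x, hx⟩
  · rcases (erase_eq_empty_iff M w).1 h with h | h
    exacts [absurd h hne, absurd h (hsingle w)]
  · by_cases hwM : w ∈ M
    · exact absurd (by rw [← insert_erase hwM, h, insert_erase hw]) hV
    · exact Or.inl (by rwa [erase_eq_of_notMem hwM] at h)
  · have hxM : x ∈ M.erase w := hx ▸ mem_singleton_self x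
    by_cases hwM : w ∈ M
    · exact Or.inr ⟨x, hM.1 (mem_of_mem_erase hxM), ne_of_mem_erase hxM,
        by rw [← insert_erase hwM, hx]⟩
    · exact absurd (by rwa [erase_eq_of_notMem hwM] at hx) (hsingle x)

theorem IsModule.map_swap_mem_of_mem_of_notMem {w x : α} (hM : IsModule V E {w, x})
    {e : Finset α} (he : e ∈ E) (hcard : 2 ≤ e.card) (hw : w ∈ e) (hx : x ∉ e) :
    e.map (Equiv.swap w x).toEmbedding ∈ E := by
  have hmeet : e ∩ {w, x} = {w} := by grind
  obtain ⟨a, hae, haw⟩ := exists_mem_ne hcard w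
  have hout : (e \ {w, x}).Nonempty := ⟨a, by grind⟩
  obtain ⟨m, -, hem, hswap⟩ := hM.2 e he (hmeet ▸ singleton_nonempty w) hout
  obtain rfl : w = m := singleton_injective (hmeet.symm.trans hem)
  rw [map_swap_of_mem_of_notMem hw hx]
  exact hswap x (by simp)

theorem IsModule.map_swap_mem {w x : α} (hM : IsModule V E {w, x})
    (hcard : ∀ e ∈ E, 2 ≤ e.card) {e : Finset α} (he : e ∈ E) :
    e.map (Equiv.swap w x).toEmbedding ∈ E := by
  by_cases hwx : w ∈ e ↔ x ∈ e
  · rwa [map_swap_eq_self hwx]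
  by_cases hw : w ∈ e
  · exact hM.map_swap_mem_of_mem_of_notMem he (hcard e he) hw (by tauto)
  · rw [pair_comm] at hM
    rw [Equiv.swap_comm]
    exact hM.map_swap_mem_of_mem_of_notMem he (hcard e he) (by tauto) hw

theorem IsModule.map_swap_mem_iff {w x : α} (hM : IsModule V E {w, x})
    (hcard : ∀ e ∈ E, 2 ≤ e.card) (e : Finset α) :
    e ∈ E ↔ e.map (Equiv.swap w x).toEmbedding ∈ E := by
  refine ⟨hM.map_swap_mem hcard, fun he => ?_⟩
  have hinv : (e.map (Equiv.swap w x).toEmbedding).map (Equiv.swap w x).toEmbedding = e := by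
    ext a
    simp [mem_map_equiv]
  simpa [hinv] using hM.map_swap_mem hcard he

end Modules

theorem primality_degree_one_complement_module_general {α : Type*} [DecidableEq α]
    (verts : Finset α) (edges : Set (Finset α)) (h3 : Is3Hypergraph verts edges)
    (hc : IsCritical verts edges)
    (v w : α) (h1 : PrimAdj verts edges v w)
    (hdeg : ∀ w', PrimAdj verts edges v w' → w' = w) :
    IsModule (verts.erase v) (induceEdges (verts.erase v) edges) (verts \ {v, w}) := by
  obtain ⟨hvw, hv, hw, hprime⟩ := h1
  set U := verts.erase v
  have hdel : ∀ u, verts \ {v, u} = U.erase u := fun u => by grind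
  have hind : ∀ u, induceEdges (verts \ {v, u}) edges =
      induceEdges (U.erase u) (induceEdges U edges) := fun u => by
    rw [hdel, induceEdges_induceEdges _ (erase_subset u U)]
  have hwU : w ∈ U := mem_erase.2 ⟨hvw.symm, hw⟩
  rw [hind, hdel] at hprime
  have hU3 : 3 ≤ U.card := hprime.1.trans (card_le_card (erase_subset w U))
  obtain ⟨M, hM, hne, hU, hsingle⟩ := exists_nontrivial_module_of_not_isPrime hU3 (hc.2 v hv)
  rcases hM.eq_erase_or_eq_pair hwU hprime hne hU hsingle with rfl | ⟨x, hxU, hxw, rfl⟩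
  · rwa [hdel]
  have hcard : ∀ e ∈ induceEdges U edges, 2 ≤ e.card := fun e he => by
    rw [(h3 e he.1).2]; norm_num
  refine absurd (hdeg x ⟨(ne_of_mem_erase hxU).symm, hv, mem_of_mem_erase hxU, ?_⟩) hxw
  rw [hind, hdel]
  refine IsPrime.induceEdges_of_perm (Equiv.swap w x) (hM.map_swap_mem_iff hcard) ?_
  rwa [map_swap_erase hwU hxU]

theorem primality_degree_one_complement_module {α : Type*} [DecidableEq α]
    (verts : Finset α) (edges : Set (Finset α)) (h3 : Is3Hypergraph verts edges)
    (hc : IsCritical verts edges) (h5 : 5 ≤ verts.card)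
    (v w : α) (h1 : PrimAdj verts edges v w)
    (hdeg : ∀ w', PrimAdj verts edges v w' → w' = w) :
    IsModule (verts.erase v) (induceEdges (verts.erase v) edges) (verts \ {v, w}) :=
  primality_degree_one_complement_module_general verts edges h3 hc v w h1 hdeg
end

section
/- Let H be a critical 3-hypergraph defined on {0,…,p−1}, p ≥ 5. If there exists k ∈ {3,…,p} such that the primality graph of H induced on {0,…,k−1} equals the cycle C_k, then p is odd, k = p, and H = C_3(T_p), where T_p is the critical circular tournament on {0,…,p−1}. -/
/-- `(verts, arc)` is a tournament: the arc relation is irreflexive and, on distinct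
vertices of `verts`, exactly one of `arc x y`, `arc y x` holds. -/
def IsTournament {α : Type*} (verts : Finset α) (arc : α → α → Prop) : Prop :=
  (∀ x, ¬ arc x x) ∧ ∀ x ∈ verts, ∀ y ∈ verts, x ≠ y → (arc x y ↔ ¬ arc y x)

/-- `M` is a module of the tournament `(verts, arc)`. -/
def TournMod {α : Type*} (verts : Finset α) (arc : α → α → Prop) (M : Finset α) : Prop :=
  M ⊆ verts ∧ ∀ x ∈ M, ∀ y ∈ M, ∀ v ∈ verts, arc x v → arc v y → v ∈ M

/-- The edge set of the C₃-structure of a tournament: the 3-sets inducing a 3-cycle. -/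
def c3Edges {α : Type*} [DecidableEq α] (verts : Finset α) (arc : α → α → Prop) :
    Set (Finset α) :=
  {e | ∃ x y z, x ∈ verts ∧ y ∈ verts ∧ z ∈ verts ∧
    x ≠ y ∧ y ≠ z ∧ x ≠ z ∧ arc x y ∧ arc y z ∧ arc z x ∧ e = {x, y, z}}

/-- Arc relation of the tournament `T_p` on `{0, …, p-1}`: obtained from the transitive
tournament (arcs `i j` for `i < j`) by reversing all arcs between even and odd vertices. -/
def arcT (i j : ℕ) : Prop :=
  (i < j ∧ i % 2 = j % 2) ∨ (j < i ∧ i % 2 ≠ j % 2)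


/-!
For a vertex `a` of the cycle, `H - a` is not prime while `H - {a, a ± 1}` are; this forces
`{a - 1, a + 1}` to be a module of `H - a`. So an edge avoiding `a` never contains both `a ± 1`,
and may trade one of them for the other: the cycle vertices of an edge slide along the cycle in
steps of two through positions not in the edge, and two cycle vertices of an edge that are
consecutive among its cycle vertices are at odd distance. Hence if `k` is even the even cycle
vertices form a nontrivial module of `H`, and if `k` is odd the whole cycle is a module of `H`,
so it is all of `H`. Finally, sliding connects all triples whose gaps along the cycle are odd, and
these are exactly the 3-cycles of `T_p`.
-/

open Finset Function

section Modules

variable {α : Type*} [DecidableEq α] {V W W' M C e : Finset α} {E : Set (Finset α)}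

lemma IsPrime.eq_of_isModule (hP : IsPrime V E) (hM : IsModule V E M) (hMn : M.Nontrivial) :
    M = V := by
  rcases hP.2 M hM with rfl | h | ⟨v, rfl⟩
  · simp at hMn
  · exact h
  · simp at hMn

lemma IsPrime.edges_nonempty (hP : IsPrime V E) : E.Nonempty := by
  by_contra h
  rw [Set.not_nonempty_iff_eq_empty] at h
  subst h
  obtain ⟨x, hx, y, hy, hxy⟩ : V.Nontrivial :=
    one_lt_card_iff_nontrivial.1 (by have := hP.1; omega)
  have hM : IsModule V ∅ {x, y} :=
    ⟨by rw [insert_subset_iff, singleton_subset_iff]; exact ⟨hx, hy⟩, by simp⟩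
  have := congrArg card (hP.eq_of_isModule hM ⟨x, by simp, y, by simp, hxy⟩)
  rw [card_pair hxy] at this
  have := hP.1
  omega

lemma exists_isModule_of_not_isPrime (hV : 3 ≤ V.card) (hP : ¬ IsPrime V E) :
    ∃ M, IsModule V E M ∧ M.Nontrivial ∧ M ≠ V := by
  simp only [IsPrime, hV, true_and, not_forall] at hP
  obtain ⟨M, hM, h⟩ := hP
  push Not at h
  obtain ⟨h0, hMV, h1⟩ := h
  rcases h0.exists_eq_singleton_or_nontrivial with ⟨v, hv⟩ | hMn
  · exact absurd hv (h1 v)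
  · exact ⟨M, hM, hMn, hMV⟩

lemma IsModule.inter_of_subset (hM : IsModule W (induceEdges W E) M) (hW : W' ⊆ W) :
    IsModule W' (induceEdges W' E) (M ∩ W') := by
  refine ⟨inter_subset_right, fun e he h1 h2 => ?_⟩
  have hcap : e ∩ (M ∩ W') = e ∩ M := by
    rw [← inter_assoc, inter_eq_left.2 (inter_subset_left.trans he.2)]
  have hsd : e \ (M ∩ W') = e \ M := by
    rw [sdiff_inter_distrib_right, sdiff_eq_empty_iff_subset.2 he.2, union_empty]
  rw [hcap] at h1 ⊢
  rw [hsd] at h2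
  obtain ⟨m, hm, hcapm, hswap⟩ := hM.2 e ⟨he.1, he.2.trans hW⟩ h1 h2
  have hme : m ∈ e := mem_of_mem_inter_left (hcapm ▸ mem_singleton_self m)
  refine ⟨m, mem_inter.2 ⟨hm, he.2 hme⟩, hcapm, fun n hn => ⟨(hswap n (mem_inter.1 hn).1).1, ?_⟩⟩
  exact union_subset (sdiff_subset.trans he.2) (singleton_subset_iff.2 (mem_inter.1 hn).2)

lemma IsModule.insert_mem_of_insert_mem (hM : IsModule W E M) {u v : α} (hu : u ∈ M)
    (hv : v ∈ M) (hCM : Disjoint C M) (hC : C.Nonempty) (he : insert u C ∈ E) :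
    insert v C ∈ E := by
  obtain ⟨m, -, hcap, hswap⟩ := hM.2 _ he ⟨u, by simp [hu]⟩
    (hC.mono fun t ht => mem_sdiff.2 ⟨mem_insert_of_mem ht, disjoint_left.1 hCM ht⟩)
  have hum : u = m := by simpa [hcap] using (mem_inter.2 ⟨mem_insert_self u C, hu⟩ : u ∈ _)
  subst hum
  have huC : u ∉ C := fun h => disjoint_left.1 hCM h hu
  simpa [sdiff_singleton_eq_erase, erase_insert huC, union_comm, ← insert_eq] using hswap v hv

lemma IsModule.eq_of_mem_of_mem (hM : IsModule W E M) (he : e ∈ E) (hout : (e \ M).Nonempty)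
    {u v : α} (hu : u ∈ e ∩ M) (hv : v ∈ e ∩ M) : u = v := by
  obtain ⟨m, -, hcap, -⟩ := hM.2 e he ⟨u, hu⟩ hout
  rw [hcap, mem_singleton] at hu hv
  rw [hu, hv]

end Modules

section Critical

variable {α : Type*} [DecidableEq α] {V M : Finset α} {E : Set (Finset α)} {x y z : α}

lemma sdiff_pair_subset_erase (V : Finset α) (x y : α) : V \ {x, y} ⊆ V.erase x :=
  (sdiff_subset_sdiff subset_rfl (by simp)).trans (sdiff_singleton_eq_erase x V).le

lemma mem_of_isPrime_sdiff_pair (hV : 5 ≤ V.card) (hy : y ∈ V) (hxy : x ≠ y) (hyz : y ≠ z)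
    (hM : IsModule (V.erase x) (induceEdges (V.erase x) E) M) (hMn : M.Nontrivial)
    (hPy : IsPrime (V \ {x, y}) (induceEdges (V \ {x, y}) E))
    (hPz : IsPrime (V \ {x, z}) (induceEdges (V \ {x, z}) E)) : y ∈ M := by
  by_contra hyM
  have hMy : M ∩ (V \ {x, y}) = M := inter_eq_left.2 fun t ht => by
    have := hM.1 ht
    simp only [mem_erase] at this
    simp only [mem_sdiff, mem_insert, mem_singleton, not_or]
    exact ⟨this.2, this.1, fun h => hyM (h ▸ ht)⟩
  have hMeq : M = V \ {x, y} :=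
    hMy ▸ hPy.eq_of_isModule (hM.inter_of_subset (sdiff_pair_subset_erase V x y)) (hMy.symm ▸ hMn)
  have hMz : M ∩ (V \ {x, z}) = V \ {x, y, z} := by
    ext t; simp only [hMeq, mem_inter, mem_sdiff, mem_insert, mem_singleton]; tauto
  have hcard : 1 < (V \ {x, y, z}).card := by
    have := le_card_sdiff {x, y, z} V
    have : ({x, y, z} : Finset α).card ≤ 3 := card_le_three
    omega
  have h := hPz.eq_of_isModule (hM.inter_of_subset (sdiff_pair_subset_erase V x z))
    (hMz ▸ one_lt_card_iff_nontrivial.1 hcard)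
  have : y ∈ V \ {x, z} := by simp [hy, hxy.symm, hyz]
  rw [← h, hMz] at this
  simp at this

lemma isModule_pair_of_isPrime_sdiff_pair (hV : 5 ≤ V.card) (hy : y ∈ V) (hz : z ∈ V)
    (hxy : x ≠ y) (hxz : x ≠ z) (hyz : y ≠ z)
    (hx : ¬ IsPrime (V.erase x) (induceEdges (V.erase x) E))
    (hPy : IsPrime (V \ {x, y}) (induceEdges (V \ {x, y}) E))
    (hPz : IsPrime (V \ {x, z}) (induceEdges (V \ {x, z}) E)) :
    IsModule (V.erase x) (induceEdges (V.erase x) E) {y, z} := by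
  have hcard : 3 ≤ (V.erase x).card := by
    have := pred_card_le_card_erase (s := V) (a := x)
    omega
  obtain ⟨M, hM, hMn, hMV⟩ := exists_isModule_of_not_isPrime hcard hx
  have hyM := mem_of_isPrime_sdiff_pair hV hy hxy hyz hM hMn hPy hPz
  have hzM := mem_of_isPrime_sdiff_pair hV hz hxz hyz.symm hM hMn hPz hPy
  have hrest : ¬ (M ∩ (V \ {x, y})).Nontrivial := fun hn => by
    have h := hPy.eq_of_isModule (hM.inter_of_subset (sdiff_pair_subset_erase V x y)) hn
    refine hMV (subset_antisymm hM.1 fun t ht => ?_)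
    by_cases hty : t = y
    · exact hty ▸ hyM
    · have : t ∈ V \ {x, y} := by simp_all
      exact mem_of_mem_inter_left (h ▸ this)
  have hz' : z ∈ M ∩ (V \ {x, y}) := by simp [hzM, hz, hxz.symm, hyz.symm]
  have hMeq : M = {y, z} := by
    refine subset_antisymm (fun t ht => ?_) (insert_subset hyM (singleton_subset_iff.2 hzM))
    by_cases hty : t = y
    · simp [hty]
    · have ht' : t ∈ M ∩ (V \ {x, y}) := by
        have := mem_erase.1 (hM.1 ht)
        simp_all
      have htz : t = z := by
        by_contra h
        exact hrest ⟨t, ht', z, hz', h⟩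
      simp [htz]
  exact hMeq ▸ hM

end Critical

section Hypergraph

variable {α : Type*} [DecidableEq α] {V e : Finset α} {E : Set (Finset α)} {x y z : α}

lemma Is3Hypergraph.mem_induceEdges_erase (hH : Is3Hypergraph V E) (he : e ∈ E) (hx : x ∉ e) :
    e ∈ induceEdges (V.erase x) E :=
  ⟨he, fun _ ht => mem_erase.2 ⟨fun h => hx (h ▸ ht), (hH e he).1 ht⟩⟩

lemma Is3Hypergraph.eq_triple (hH : Is3Hypergraph V E) (he : e ∈ E) (hx : x ∈ e) (hy : y ∈ e)
    (hz : z ∈ e) (hxy : x ≠ y) (hxz : x ≠ z) (hyz : y ≠ z) : e = {x, y, z} := by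
  refine (eq_of_subset_of_card_le ?_ ?_).symm
  · intro t ht
    simp only [mem_insert, mem_singleton] at ht
    rcases ht with rfl | rfl | rfl <;> assumption
  · rw [(hH e he).2, card_eq_three.2 ⟨x, y, z, hxy, hxz, hyz, rfl⟩]

lemma triple_eq_insert_pair (x y z : α) : ({x, y, z} : Finset α) = insert z {x, y} := by
  ext
  simp only [mem_insert, mem_singleton]
  tauto

end Hypergraph

namespace ZMod

variable {k : ℕ}

lemma natCast_inj_of_lt {i j : ℕ} (hi : i < k) (hj : j < k) : (i : ZMod k) = j ↔ i = j := by
  rw [natCast_eq_natCast_iff', Nat.mod_eq_of_lt hi, Nat.mod_eq_of_lt hj]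

lemma natCast_ne_zero_of_lt {i : ℕ} (h0 : 0 < i) (hi : i < k) : (i : ZMod k) ≠ 0 := by
  rw [← Nat.cast_zero, Ne, natCast_inj_of_lt hi (by omega)]
  omega

lemma add_one_ne_self (hk : 2 ≤ k) (a : ZMod k) : a + 1 ≠ a :=
  add_ne_left.2 (Nat.cast_one (R := ZMod k) ▸ natCast_ne_zero_of_lt one_pos (by omega))

lemma sub_one_ne_self (hk : 2 ≤ k) (a : ZMod k) : a - 1 ≠ a := fun h =>
  add_one_ne_self hk (a - 1) (by rw [sub_add_cancel, h])

lemma sub_one_ne_add_one (hk : 3 ≤ k) (a : ZMod k) : a - 1 ≠ a + 1 := fun h =>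
  natCast_ne_zero_of_lt (k := k) (i := 2) two_pos (by omega) (by push_cast; linear_combination -h)

lemma val_add_natCast_mod_two [NeZero k] (hk : Even k) (a : ZMod k) (n : ℕ) :
    (a + n).val % 2 = (a.val + n) % 2 := by
  have h2 : 2 ∣ k := even_iff_two_dvd.1 hk
  rw [val_add, val_natCast, Nat.mod_mod_of_dvd _ h2, Nat.add_mod, Nat.mod_mod_of_dvd _ h2,
    ← Nat.add_mod]

lemma exists_eq_add_two_mul [NeZero k] (hk : Odd k) (a b : ZMod k) :
    ∃ j : ℕ, b = a + (2 * j : ℕ) := by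
  obtain ⟨r, hr⟩ := hk
  set t := (b - a).val
  have hb : b = a + (t : ℕ) := by simp [t]
  rcases Nat.even_or_odd t with ⟨j, hj⟩ | ⟨j, hj⟩
  · exact ⟨j, by rw [hb, hj, two_mul]⟩
  · refine ⟨j + r + 1, ?_⟩
    rw [hb, show 2 * (j + r + 1) = t + k by omega, Nat.cast_add, natCast_self, add_zero]

lemma exists_eq_add_one_add_two_mul [NeZero k] (hk : Even k) {δ b : ZMod k}
    (h : b.val % 2 ≠ δ.val % 2) : ∃ s : ℕ, 2 * s + 1 < k ∧ b = δ + 1 + (2 * s : ℕ) := by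
  set t := (b - (δ + 1)).val
  have hb : b = δ + 1 + (t : ℕ) := by simp [t]
  have ht : t < k := val_lt _
  have hpar := val_add_natCast_mod_two hk (δ + 1) t
  have h1 := val_add_natCast_mod_two hk δ 1
  rw [Nat.cast_one] at h1
  rw [← hb] at hpar
  obtain ⟨r, hr⟩ := hk
  refine ⟨t / 2, by omega, ?_⟩
  rw [hb, show 2 * (t / 2) = t by omega]

end ZMod

section ModularCycle

variable {α : Type*} [DecidableEq α] {k : ℕ} {V C e : Finset α}
  {E : Set (Finset α)} {σ : ZMod k → α}

def IsModularCycle (V : Finset α) (E : Set (Finset α)) (σ : ZMod k → α) : Prop :=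
  Injective σ ∧
    ∀ a, IsModule (V.erase (σ a)) (induceEdges (V.erase (σ a)) E) {σ (a - 1), σ (a + 1)}

lemma isModularCycle_of_primAdj (hV : 5 ≤ V.card) (hk : 3 ≤ k) (hinj : Injective σ)
    (hcrit : ∀ a, ¬ IsPrime (V.erase (σ a)) (induceEdges (V.erase (σ a)) E))
    (hadj : ∀ a, PrimAdj V E (σ a) (σ (a + 1))) : IsModularCycle V E σ := by
  refine ⟨hinj, fun a => ?_⟩
  have hprev := hadj (a - 1)
  rw [sub_add_cancel] at hprev
  refine isModule_pair_of_isPrime_sdiff_pair hV hprev.2.1 (hadj a).2.2.1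
    (hinj.ne (ZMod.sub_one_ne_self (by omega) a).symm)
    (hinj.ne (ZMod.add_one_ne_self (by omega) a).symm)
    (hinj.ne (ZMod.sub_one_ne_add_one hk a)) (hcrit a) ?_ (hadj a).2.2.2
  rw [pair_comm]
  exact hprev.2.2.2

namespace IsModularCycle

variable (hσ : IsModularCycle V E σ)
include hσ

lemma apply_mem (a : ZMod k) : σ a ∈ V := by
  have := (hσ.2 (a + 1)).1 (mem_insert_self _ _)
  rw [add_sub_cancel_right] at this
  exact mem_of_mem_erase this

lemma apply_add_inj {x : ZMod k} {i j : ℕ} (hi : i < k) (hj : j < k) :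
    σ (x + i) = σ (x + j) ↔ i = j := by
  rw [hσ.1.eq_iff, add_right_inj, ZMod.natCast_inj_of_lt hi hj]

lemma apply_add_eq_self {x : ZMod k} {i : ℕ} (hi : i < k) : σ (x + i) = σ x ↔ i = 0 := by
  simpa using hσ.apply_add_inj (x := x) hi (j := 0) (by omega)

lemma apply_add_mem_pair {x : ZMod k} {i a : ℕ} (hi : i < k) (ha : a < k) :
    σ (x + i) ∈ ({σ x, σ (x + a)} : Finset α) ↔ i = 0 ∨ i = a := by
  simp only [mem_insert, mem_singleton, hσ.apply_add_eq_self hi, hσ.apply_add_inj hi ha]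

lemma apply_add_mem_triple {x : ZMod k} {i a c : ℕ} (hi : i < k) (ha : a < k) (hc : c < k) :
    σ (x + i) ∈ ({σ x, σ (x + a), σ (x + c)} : Finset α) ↔ i = 0 ∨ i = a ∨ i = c := by
  simp only [mem_insert, mem_singleton, hσ.apply_add_eq_self hi, hσ.apply_add_inj hi ha,
    hσ.apply_add_inj hi hc]

variable (hH : Is3Hypergraph V E) (hk : 3 ≤ k)
include hH hk

lemma false_of_neighbours_mem {a : ZMod k} (he : e ∈ E) (ha : σ a ∉ e) (h₁ : σ (a - 1) ∈ e)
    (h₂ : σ (a + 1) ∈ e) : False := by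
  have hout : (e \ {σ (a - 1), σ (a + 1)}).Nonempty := by
    refine sdiff_nonempty.2 fun hsub => ?_
    have := card_le_card hsub
    rw [(hH e he).2] at this
    have := card_le_two (a := σ (a - 1)) (b := σ (a + 1))
    omega
  have h := (hσ.2 a).eq_of_mem_of_mem (hH.mem_induceEdges_erase he ha) hout
    (mem_inter.2 ⟨h₁, mem_insert_self _ _⟩) (mem_inter.2 ⟨h₂, by simp⟩)
  exact ZMod.sub_one_ne_add_one hk a (hσ.1 h)

lemma insert_sub_one_mem_iff {a : ZMod k} (ha : σ a ∉ C) (ha₁ : σ (a - 1) ∉ C)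
    (ha₂ : σ (a + 1) ∉ C) :
    insert (σ (a - 1)) C ∈ E ↔ insert (σ (a + 1)) C ∈ E := by
  have hCM : Disjoint C {σ (a - 1), σ (a + 1)} := by
    simp only [disjoint_insert_right, disjoint_singleton_right]
    exact ⟨ha₁, ha₂⟩
  have swap : ∀ u v, u ∈ ({σ (a - 1), σ (a + 1)} : Finset α) →
      v ∈ ({σ (a - 1), σ (a + 1)} : Finset α) → insert u C ∈ E → insert v C ∈ E := by
    intro u v hu hv he
    have hua : u ≠ σ a := by
      rcases mem_insert.1 hu with rfl | hu
      · exact hσ.1.ne (ZMod.sub_one_ne_self (by omega) a)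
      · exact mem_singleton.1 hu ▸ hσ.1.ne (ZMod.add_one_ne_self (by omega) a)
    have hC : C.Nonempty := by
      rw [nonempty_iff_ne_empty]
      rintro rfl
      simpa using (hH _ he).2
    have he' : insert u C ∈ induceEdges (V.erase (σ a)) E :=
      hH.mem_induceEdges_erase he (by simp [hua.symm, ha])
    exact ((hσ.2 a).insert_mem_of_insert_mem hu hv hCM hC he').1
  exact ⟨swap _ _ (by simp) (by simp), swap _ _ (by simp) (by simp)⟩

lemma insert_mem_iff_insert_add_two_mul (j : ℕ) {b : ZMod k}
    (hC : ∀ i ≤ 2 * j, σ (b + i) ∉ C) :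
    insert (σ b) C ∈ E ↔ insert (σ (b + (2 * j : ℕ))) C ∈ E := by
  induction j generalizing b with
  | zero => simp
  | succ j ih =>
    have hstep := hσ.insert_sub_one_mem_iff hH hk (a := b + 1) (by simpa using hC 1 (by omega))
      (by simpa using hC 0 (by omega))
      (by simpa [add_assoc, one_add_one_eq_two] using hC 2 (by omega))
    rw [add_sub_cancel_right, add_assoc, one_add_one_eq_two] at hstep
    have hnext := @ih (b + 2) fun i hi => by
      rw [show b + 2 + (i : ZMod k) = b + (i + 2 : ℕ) by push_cast; ring]
      exact hC _ (by omega)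
    rw [hstep, hnext]
    congr! 3
    push_cast
    ring

lemma odd_of_gap (he : e ∈ E) {b : ZMod k} {g : ℕ} (hb : σ b ∈ e) (hg : σ (b + g) ∈ e)
    (hg0 : 0 < g) (hgk : g < k) (hfree : ∀ i, 0 < i → i < g → σ (b + i) ∉ e) : Odd g := by
  by_contra hev
  obtain ⟨j, rfl⟩ : ∃ j, g = 2 * j + 2 := by
    obtain ⟨r, hr⟩ := Nat.not_odd_iff_even.1 hev
    exact ⟨r - 1, by omega⟩
  have hC : ∀ i ≤ 2 * j, σ (b + i) ∉ e.erase (σ b) := fun i hi h => by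
    rcases Nat.eq_zero_or_pos i with rfl | hi0
    · simp at h
    · exact hfree i hi0 (by omega) (mem_of_mem_erase h)
  -- slide `σ b` up to `b + 2j`: then `b + 2j + 1` is missing from the edge, but not its neighbours
  have hslide := (hσ.insert_mem_iff_insert_add_two_mul hH hk j hC).1 (by rwa [insert_erase hb])
  refine hσ.false_of_neighbours_mem hH hk (a := b + (2 * j + 1 : ℕ)) hslide ?_ ?_ ?_
  · rw [mem_insert, not_or, hσ.apply_add_inj (by omega) (by omega)]
    exact ⟨by omega, fun h => hfree _ (by omega) (by omega) (mem_of_mem_erase h)⟩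
  · rw [show b + ((2 * j + 1 : ℕ) : ZMod k) - 1 = b + (2 * j : ℕ) by push_cast; ring]
    exact mem_insert_self _ _
  · rw [show b + ((2 * j + 1 : ℕ) : ZMod k) + 1 = b + (2 * j + 2 : ℕ) by push_cast; ring]
    exact mem_insert_of_mem (mem_erase.2 ⟨(hσ.apply_add_eq_self hgk).not.2 (by omega), hg⟩)

lemma odd_of_triple_mem {x : ZMod k} {a c : ℕ} (ha : 0 < a) (hac : a < c) (hc : c < k)
    (he : {σ x, σ (x + a), σ (x + c)} ∈ E) : Odd a ∧ Odd (c - a) ∧ Odd (k - c) := by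
  have hmem := fun {i} (hi : i < k) => hσ.apply_add_mem_triple (x := x) hi (hac.trans hc) hc
  refine ⟨hσ.odd_of_gap hH hk he (b := x) (by simp) (by simp) ha (by omega) fun i h0 hi => ?_,
    ?_, ?_⟩
  · rw [hmem (by omega)]
    omega
  · refine hσ.odd_of_gap hH hk he (b := x + a) (by simp) ?_ (by omega) (by omega)
      fun i h0 hi => ?_
    · rw [add_assoc, ← Nat.cast_add, Nat.add_sub_cancel' hac.le]
      simp
    · rw [add_assoc, ← Nat.cast_add, hmem (by omega)]
      omega
  · refine hσ.odd_of_gap hH hk he (b := x + c) (by simp) ?_ (by omega) (by omega)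
      fun i h0 hi => ?_
    · rw [add_assoc, ← Nat.cast_add, Nat.add_sub_cancel' hc.le, ZMod.natCast_self, add_zero]
      simp
    · rw [add_assoc, ← Nat.cast_add, hmem (by omega)]
      omega

lemma triple_mem_iff_third {x : ZMod k} {a c : ℕ} (hac : a < c) (hc : c < k)
    (hca : Odd (c - a)) :
    {σ x, σ (x + a), σ (x + c)} ∈ E ↔ {σ x, σ (x + a), σ (x + (a + 1 : ℕ))} ∈ E := by
  obtain ⟨j, hj⟩ := hca
  rw [triple_eq_insert_pair (σ x) (σ (x + a)), triple_eq_insert_pair (σ x) (σ (x + a))]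
  have := hσ.insert_mem_iff_insert_add_two_mul hH hk j (C := {σ x, σ (x + a)})
    (b := x + (a + 1 : ℕ)) fun i hi => by
      rw [add_assoc, ← Nat.cast_add, hσ.apply_add_mem_pair (by omega) (by omega)]
      omega
  rw [this, add_assoc, ← Nat.cast_add, show a + 1 + 2 * j = c by omega]

lemma triple_mem_iff_second {x : ZMod k} {a : ℕ} (ha : Odd a) (hak : a + 1 < k) :
    {σ x, σ (x + a), σ (x + (a + 1 : ℕ))} ∈ E ↔ {σ x, σ (x + 1), σ (x + (a + 1 : ℕ))} ∈ E := by
  obtain ⟨j, rfl⟩ := ha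
  rw [insert_comm, insert_comm (σ x)]
  have := hσ.insert_mem_iff_insert_add_two_mul hH hk j (C := {σ x, σ (x + (2 * j + 1 + 1 : ℕ))})
    (b := x + 1) fun i hi => by
      rw [show x + 1 + (i : ZMod k) = x + (1 + i : ℕ) by push_cast; ring,
        hσ.apply_add_mem_pair (by omega) (by omega)]
      omega
  rw [this, show x + 1 + ((2 * j : ℕ) : ZMod k) = x + (2 * j + 1 : ℕ) by push_cast; ring]

lemma triple_mem_iff_consecutive {x : ZMod k} {a c : ℕ} (ha : Odd a) (hca : Odd (c - a))
    (hac : a < c) (hc : c < k) :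
    {σ x, σ (x + a), σ (x + c)} ∈ E ↔ {σ x, σ (x + 1), σ (x + 2)} ∈ E := by
  have h := hσ.triple_mem_iff_third hH hk (x := x) (a := 1) (c := a + 1)
    (by have := ha.pos; omega) (by omega) (by simpa using ha)
  simp only [Nat.cast_one, Nat.reduceAdd, Nat.cast_ofNat] at h
  rw [hσ.triple_mem_iff_third hH hk hac hc hca, hσ.triple_mem_iff_second hH hk ha (by omega), h]

lemma consecutive_mem_iff_add_one (hko : Odd k) (x : ZMod k) :
    {σ x, σ (x + 1), σ (x + 2)} ∈ E ↔ {σ (x + 1), σ (x + 1 + 1), σ (x + 1 + 2)} ∈ E := by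
  obtain ⟨r, hr⟩ := hko
  rw [show x + 1 + 1 = x + 2 by ring, show x + 1 + 2 = x + 3 by ring,
    triple_eq_insert_pair (σ (x + 1))]
  -- `k - 3` is even, so `σ (x + 3)` can travel forwards all the way round to `σ x`
  have := hσ.insert_mem_iff_insert_add_two_mul hH hk (r - 1) (C := {σ (x + 1), σ (x + 2)})
    (b := x + 3) fun i hi => by
      simp only [mem_insert, mem_singleton, hσ.1.eq_iff, not_or]
      constructor <;> intro h
      · exact ZMod.natCast_ne_zero_of_lt (k := k) (i := i + 2) (by omega) (by omega)
          (by push_cast; linear_combination h)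
      · exact ZMod.natCast_ne_zero_of_lt (k := k) (i := i + 1) (by omega) (by omega)
          (by push_cast; linear_combination h)
  rw [this, show x + 3 + ((2 * (r - 1) : ℕ) : ZMod k) = x by
    rw [show (3 : ZMod k) = (3 : ℕ) by norm_num, add_assoc, ← Nat.cast_add,
      show 3 + 2 * (r - 1) = k by omega, ZMod.natCast_self, add_zero]]

variable [NeZero k]

lemma odd_val_sub_of_two_mem (he : e ∈ E) {u v : ZMod k} (hu : σ u ∈ e) (hv : σ v ∈ e)
    (huv : u ≠ v) (honly : ∀ w, σ w ∈ e → w = u ∨ w = v) : Odd (v - u).val := by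
  have hpos : 0 < (v - u).val :=
    Nat.pos_of_ne_zero ((ZMod.val_eq_zero _).not.2 (sub_ne_zero.2 huv.symm))
  refine hσ.odd_of_gap hH hk he hu (by simpa using hv) hpos (ZMod.val_lt _)
    fun i h0 hi hmem => ?_
  rcases honly _ hmem with h | h
  · exact (hσ.apply_add_eq_self (hi.trans (ZMod.val_lt _))).not.2 h0.ne' (congrArg σ h)
  · have := congrArg ZMod.val (eq_sub_of_add_eq' h)
    rw [ZMod.val_cast_of_lt (hi.trans (ZMod.val_lt _))] at this
    omega

lemma even_of_two_mem (he : e ∈ E) {u v : ZMod k} (hu : σ u ∈ e) (hv : σ v ∈ e)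
    (huv : u ≠ v) (honly : ∀ w, σ w ∈ e → w = u ∨ w = v) : Even k := by
  have h₁ := hσ.odd_val_sub_of_two_mem hH hk he hu hv huv honly
  have h₂ := hσ.odd_val_sub_of_two_mem hH hk he hv hu huv.symm fun w hw => (honly w hw).symm
  have hsum : (v - u).val + (u - v).val = k := by
    rw [← neg_sub v u, ZMod.neg_val, if_neg (sub_ne_zero.2 huv.symm)]
    have := ZMod.val_lt (v - u)
    omega
  exact hsum ▸ h₁.add_odd h₂

lemma odd_of_three_mem (he : e ∈ E) {u v w : ZMod k} (hu : σ u ∈ e) (hv : σ v ∈ e)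
    (hw : σ w ∈ e) (huv : u ≠ v) (huw : u ≠ w) (hvw : v ≠ w) : Odd k := by
  wlog hlt : (v - u).val < (w - u).val generalizing v w
  · refine this hw hv huw huv hvw.symm (lt_of_le_of_ne (not_lt.1 hlt) fun h => hvw ?_)
    simpa using ZMod.val_injective k h.symm
  have hpos : 0 < (v - u).val :=
    Nat.pos_of_ne_zero ((ZMod.val_eq_zero _).not.2 (sub_ne_zero.2 huv.symm))
  have he' : {σ u, σ (u + (v - u).val), σ (u + (w - u).val)} ∈ E := by
    simp only [ZMod.natCast_zmod_val, add_sub_cancel]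
    rwa [← hH.eq_triple he hu hv hw (hσ.1.ne huv) (hσ.1.ne huw) (hσ.1.ne hvw)]
  obtain ⟨h₁, h₂, h₃⟩ := hσ.odd_of_triple_mem hH hk hpos hlt (ZMod.val_lt _) he'
  have hsum : (v - u).val + ((w - u).val - (v - u).val) + (k - (w - u).val) = k := by
    have := ZMod.val_lt (w - u)
    omega
  exact hsum ▸ (h₁.add_odd h₂).add_odd h₃

lemma exists_other_parity_of_even (hke : Even k) (he : e ∈ E) {m : ZMod k} (hm : σ m ∈ e) :
    ∃ δ : ZMod k, δ.val % 2 ≠ m.val % 2 ∧ ∀ w, σ w ∈ e.erase (σ m) → w = δ := by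
  by_cases hd : ∃ d, σ d ∈ e.erase (σ m)
  · obtain ⟨d, hd⟩ := hd
    have hdm : d ≠ m := fun h => by simp [h] at hd
    have honly : ∀ w, σ w ∈ e.erase (σ m) → w = d := fun w hw => by
      by_contra hwd
      have hwm : w ≠ m := fun h => by simp [h] at hw
      exact Nat.not_even_iff_odd.2 (hσ.odd_of_three_mem hH hk he hm (mem_of_mem_erase hd)
        (mem_of_mem_erase hw) hdm.symm (Ne.symm hwm) (Ne.symm hwd)) hke
    have hodd := hσ.odd_val_sub_of_two_mem hH hk he hm (mem_of_mem_erase hd) hdm.symm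
      fun w hw => (em (w = m)).imp_right fun hwm => honly w (mem_erase.2 ⟨hσ.1.ne hwm, hw⟩)
    refine ⟨d, ?_, honly⟩
    have := ZMod.val_add_natCast_mod_two hke m (d - m).val
    rw [ZMod.natCast_zmod_val, add_sub_cancel] at this
    obtain ⟨r, hr⟩ := hodd
    omega
  · push Not at hd
    refine ⟨m - 1, ?_, fun w hw => absurd hw (hd w)⟩
    have := ZMod.val_add_natCast_mod_two hke (m - 1) 1
    rw [Nat.cast_one, sub_add_cancel] at this
    omega

lemma insert_mem_iff_of_other_parity (hke : Even k) {δ : ZMod k}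
    (hC : ∀ w, σ w ∈ C → w = δ) {w : ZMod k} (hw : w.val % 2 ≠ δ.val % 2) :
    insert (σ w) C ∈ E ↔ insert (σ (δ + 1)) C ∈ E := by
  obtain ⟨s, hs, rfl⟩ := ZMod.exists_eq_add_one_add_two_mul hke hw
  refine (hσ.insert_mem_iff_insert_add_two_mul hH hk s fun i hi hmem => ?_).symm
  refine ZMod.natCast_ne_zero_of_lt (k := k) (i := 1 + i) (by omega) (by omega) ?_
  have := hC _ hmem
  push_cast
  linear_combination this

lemma isModule_image_even_val (hke : Even k) :
    IsModule V E ((univ.filter fun a : ZMod k => Even a.val).image σ) := by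
  refine ⟨fun t ht => ?_, fun e he hmeet _ => ?_⟩
  · obtain ⟨a, -, rfl⟩ := mem_image.1 ht
    exact hσ.apply_mem a
  obtain ⟨t, ht⟩ := hmeet
  simp only [mem_inter, mem_image, mem_filter, mem_univ, true_and] at ht
  obtain ⟨hte, m, hm, rfl⟩ := ht
  obtain ⟨δ, hδ, hCδ⟩ := hσ.exists_other_parity_of_even hH hk hke he hte
  have hother : ∀ w : ZMod k, Even w.val → w.val % 2 ≠ δ.val % 2 := fun w hw => by
    rw [Nat.even_iff] at hw hm
    omega
  have hswap : ∀ w : ZMod k, Even w.val → insert (σ w) (e.erase (σ m)) ∈ E := fun w hw => by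
    rw [hσ.insert_mem_iff_of_other_parity hH hk hke hCδ (hother w hw),
      ← hσ.insert_mem_iff_of_other_parity hH hk hke hCδ (hother m hm), insert_erase hte]
    exact he
  refine ⟨σ m, mem_image_of_mem _ (by simpa using hm), ?_, fun n hn => ?_⟩
  · ext t
    simp only [mem_inter, mem_image, mem_filter, mem_univ, true_and, mem_singleton]
    refine ⟨fun ⟨ht, w, hw, hwt⟩ => ?_, fun h => ⟨h ▸ hte, m, hm, h.symm⟩⟩
    subst hwt
    by_contra hwm
    exact hother w hw (congrArg (·.val % 2) (hCδ w (mem_erase.2 ⟨hwm, ht⟩)))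
  · obtain ⟨w, hw, rfl⟩ := mem_image.1 hn
    rw [← sdiff_singleton_eq_erase] at hswap
    simpa [union_comm, ← insert_eq] using hswap w (by simpa using hw)

lemma apply_notMem_erase_of_odd (hko : Odd k) (he : e ∈ E) (hout : ¬ e ⊆ univ.image σ)
    {m : ZMod k} (hm : σ m ∈ e) (d : ZMod k) : σ d ∉ e.erase (σ m) := fun hd => by
  have hdm : d ≠ m := fun h => by simp [h] at hd
  by_cases hw : ∃ w, σ w ∈ e.erase (σ m) ∧ w ≠ d
  · obtain ⟨w, hw, hwd⟩ := hw
    have hwm : w ≠ m := fun h => by simp [h] at hw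
    refine hout ?_
    rw [hH.eq_triple he hm (mem_of_mem_erase hd) (mem_of_mem_erase hw) (hσ.1.ne hdm.symm)
      (hσ.1.ne hwm.symm) (hσ.1.ne hwd.symm)]
    simp [insert_subset_iff]
  · push Not at hw
    refine Nat.not_even_iff_odd.2 hko (hσ.even_of_two_mem hH hk he hm (mem_of_mem_erase hd)
      hdm.symm fun w hw' => (em (w = m)).imp_right fun hwm => ?_)
    exact hw w (mem_erase.2 ⟨hσ.1.ne hwm, hw'⟩)

lemma isModule_image_univ (hko : Odd k) : IsModule V E (univ.image σ) := by
  refine ⟨fun t ht => ?_, fun e he hmeet hout => ?_⟩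
  · obtain ⟨a, -, rfl⟩ := mem_image.1 ht
    exact hσ.apply_mem a
  obtain ⟨t, ht⟩ := hmeet
  obtain ⟨hte, m, -, rfl⟩ := by simpa only [mem_inter, mem_image] using ht
  have hC := hσ.apply_notMem_erase_of_odd hH hk hko he (sdiff_nonempty.1 hout) hte
  refine ⟨σ m, mem_image_of_mem _ (mem_univ m), ?_, fun n hn => ?_⟩
  · ext t
    simp only [mem_inter, mem_image, mem_univ, true_and, mem_singleton]
    refine ⟨fun ⟨ht, w, hwt⟩ => ?_, fun h => ⟨h ▸ hte, m, h.symm⟩⟩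
    subst hwt
    by_contra hwm
    exact hC w (mem_erase.2 ⟨hwm, ht⟩)
  · obtain ⟨w, -, rfl⟩ := mem_image.1 hn
    obtain ⟨j, rfl⟩ := ZMod.exists_eq_add_two_mul hko m w
    have := (hσ.insert_mem_iff_insert_add_two_mul hH hk j fun i _ => hC _).1
      (by rwa [insert_erase hte])
    simpa [sdiff_singleton_eq_erase, union_comm, ← insert_eq] using this

lemma not_isPrime_of_even (hke : Even k) : ¬ IsPrime V E := fun hP => by
  have hM := hσ.isModule_image_even_val hH hk hke
  have hmem : ∀ i < k, (σ i ∈ (univ.filter fun a : ZMod k => Even a.val).image σ ↔ Even i) :=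
    fun i hi => by simp [hσ.1.eq_iff, ZMod.val_cast_of_lt hi]
  have h0 := (hmem 0 (by omega)).2 (by decide)
  have h2 := (hmem 2 (by omega)).2 even_two
  have h1 := (hmem 1 (by omega)).not.2 Nat.not_even_one
  have hne : σ (0 : ℕ) ≠ σ (2 : ℕ) :=
    hσ.1.ne ((ZMod.natCast_inj_of_lt (by omega) (by omega)).not.2 (by omega))
  rw [hP.eq_of_isModule hM ⟨_, h0, _, h2, hne⟩] at h1
  exact h1 (hσ.apply_mem _)

lemma image_univ_eq_of_isPrime (hP : IsPrime V E) (hko : Odd k) : univ.image σ = V :=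
  hP.eq_of_isModule (hσ.isModule_image_univ hH hk hko)
    ⟨σ 0, by simp, σ 1, by simp,
      hσ.1.ne (by simpa using (ZMod.add_one_ne_self (by omega) (0 : ZMod k)).symm)⟩

lemma consecutive_mem_iff_zero (hko : Odd k) (x : ZMod k) :
    {σ x, σ (x + 1), σ (x + 2)} ∈ E ↔ {σ 0, σ 1, σ 2} ∈ E := by
  rw [← ZMod.natCast_zmod_val x]
  induction x.val with
  | zero => simp
  | succ n ih => rw [Nat.cast_succ, ← hσ.consecutive_mem_iff_add_one hH hk hko, ih]

end IsModularCycle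

end ModularCycle

lemma primAdj_val_add_one {V : Finset ℕ} {E : Set (Finset ℕ)} {k : ℕ} [NeZero k] (hk : 2 ≤ k)
    (hcyc : ∀ i < k, ∀ j < k,
      (j = i + 1 ∨ i = j + 1 ∨ (i = 0 ∧ j = k - 1) ∨ (j = 0 ∧ i = k - 1)) → PrimAdj V E i j)
    (a : ZMod k) : PrimAdj V E a.val (a + 1).val := by
  refine hcyc _ a.val_lt _ (a + 1).val_lt ?_
  have hval : (a + 1).val = (a.val + 1) % k := by
    rw [ZMod.val_add, ZMod.val_one_eq_one_mod, Nat.mod_eq_of_lt (by omega : 1 < k)]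
  by_cases h : a.val + 1 < k
  · left
    rw [hval, Nat.mod_eq_of_lt h]
  · right; right; right
    have := a.val_lt
    exact ⟨by rw [hval, show a.val + 1 = k by omega, Nat.mod_self], by omega⟩

lemma exists_lt_lt_eq_of_card_eq_three {β : Type*} [LinearOrder β] {s : Finset β}
    (hs : s.card = 3) : ∃ a b c, a < b ∧ b < c ∧ s = {a, b, c} := by
  obtain ⟨x, y, z, hxy, hxz, hyz, rfl⟩ := card_eq_three.1 hs
  rcases hxy.lt_or_gt with h₁ | h₁ <;> rcases hxz.lt_or_gt with h₂ | h₂ <;>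
    rcases hyz.lt_or_gt with h₃ | h₃
  all_goals first
    | exact absurd (h₁.trans h₃) h₂.not_gt
    | exact absurd (h₁.trans h₂) h₃.not_gt
    | exact absurd (h₂.trans h₃) h₁.not_gt
    | exact ⟨_, _, _, h₁, h₃, rfl⟩
    | exact ⟨_, _, _, h₂, h₃, by rw [pair_comm]⟩
    | exact ⟨_, _, _, h₁, h₂, insert_comm _ _ _⟩
    | exact ⟨_, _, _, h₂, h₁, by ext; simp only [mem_insert, mem_singleton]; tauto⟩
    | exact ⟨_, _, _, h₃, h₂, by ext; simp only [mem_insert, mem_singleton]; tauto⟩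
    | exact ⟨_, _, _, h₃, h₁, by ext; simp only [mem_insert, mem_singleton]; tauto⟩

lemma mem_c3Edges_arcT_iff {p : ℕ} {e : Finset ℕ} :
    e ∈ c3Edges (range p) arcT ↔
      ∃ a b c, a < b ∧ b < c ∧ c < p ∧ e = {a, b, c} ∧ Odd (b - a) ∧ Odd (c - b) := by
  simp only [c3Edges, arcT, mem_range, Set.mem_ofPred_eq, Nat.odd_iff]
  constructor
  · rintro ⟨x, y, z, hx, hy, hz, hxy, hyz, hxz, h₁, h₂, h₃, rfl⟩
    rcases hxy.lt_or_gt with h₄ | h₄ <;> rcases hxz.lt_or_gt with h₅ | h₅ <;>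
      rcases hyz.lt_or_gt with h₆ | h₆
    all_goals first
      | omega
      | exact ⟨x, z, y, by omega, by omega, by omega, by rw [pair_comm], by omega, by omega⟩
      | exact ⟨z, y, x, by omega, by omega, by omega, by
          ext; simp only [mem_insert, mem_singleton]; tauto, by omega, by omega⟩
      | exact ⟨y, x, z, by omega, by omega, by omega, insert_comm _ _ _, by omega, by omega⟩
  · rintro ⟨a, b, c, hab, hbc, hcp, rfl, h₁, h₂⟩
    exact ⟨a, c, b, by omega, by omega, by omega, by omega, by omega, by omega, by omega,
      by omega, by omega, by rw [pair_comm]⟩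

lemma edges_eq_c3Edges_arcT {p : ℕ} [NeZero p] {E : Set (Finset ℕ)}
    (hH : Is3Hypergraph (range p) E) (hσ : IsModularCycle (range p) E (ZMod.val : ZMod p → ℕ))
    (hp : 3 ≤ p) (hpo : Odd p) (hE : E.Nonempty) : E = c3Edges (range p) arcT := by
  have htriple : ∀ {a b c : ℕ}, a < b → b < c → c < p → ({a, b, c} : Finset ℕ) =
      {(a : ZMod p).val, ((a : ZMod p) + (b - a : ℕ)).val, ((a : ZMod p) + (c - a : ℕ)).val} := by
    intro a b c hab hbc hcp
    rw [← Nat.cast_add, ← Nat.cast_add, Nat.add_sub_cancel' hab.le,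
      Nat.add_sub_cancel' (hab.trans hbc).le, ZMod.val_cast_of_lt (by omega),
      ZMod.val_cast_of_lt (by omega), ZMod.val_cast_of_lt hcp]
  have hgap : ∀ {a b c : ℕ}, a < b → b < c → c - a - (b - a) = c - b := by omega
  have hsub : E ⊆ c3Edges (range p) arcT := fun e he => by
    obtain ⟨a, b, c, hab, hbc, rfl⟩ := exists_lt_lt_eq_of_card_eq_three (hH e he).2
    have hcp : c < p := mem_range.1 ((hH _ he).1 (by simp))
    rw [htriple hab hbc hcp] at he
    obtain ⟨h₁, h₂, -⟩ := hσ.odd_of_triple_mem hH hp (by omega) (by omega) (by omega) he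
    exact mem_c3Edges_arcT_iff.2 ⟨a, b, c, hab, hbc, hcp, rfl, h₁, hgap hab hbc ▸ h₂⟩
  have hmem : ∀ e ∈ c3Edges (range p) arcT,
      e ∈ E ↔ {(0 : ZMod p).val, (1 : ZMod p).val, (2 : ZMod p).val} ∈ E := fun e he => by
    obtain ⟨a, b, c, hab, hbc, hcp, rfl, h₁, h₂⟩ := mem_c3Edges_arcT_iff.1 he
    rw [htriple hab hbc hcp, hσ.triple_mem_iff_consecutive hH hp h₁ (hgap hab hbc ▸ h₂)
      (by omega) (by omega), hσ.consecutive_mem_iff_zero hH hp hpo]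
  obtain ⟨e₀, he₀⟩ := hE
  exact subset_antisymm hsub fun e he => (hmem e he).2 ((hmem e₀ (hsub he₀)).1 he₀)

theorem primality_cycle_characterization
    (p : ℕ) (hp : 5 ≤ p) (edges : Set (Finset ℕ))
    (h3 : Is3Hypergraph (Finset.range p) edges)
    (hc : IsCritical (Finset.range p) edges)
    (k : ℕ) (hk3 : 3 ≤ k) (hkp : k ≤ p)
    (hcyc : ∀ i < k, ∀ j < k, PrimAdj (Finset.range p) edges i j ↔
      (j = i + 1 ∨ i = j + 1 ∨ (i = 0 ∧ j = k - 1) ∨ (j = 0 ∧ i = k - 1))) :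
    Odd p ∧ k = p ∧ edges = c3Edges (Finset.range p) arcT := by
  have : NeZero k := ⟨by omega⟩
  have hσ : IsModularCycle (range p) edges (ZMod.val : ZMod k → ℕ) :=
    isModularCycle_of_primAdj (by simpa using hp) hk3 (ZMod.val_injective k)
      (fun a => hc.2 _ (mem_range.2 (a.val_lt.trans_le hkp)))
      (primAdj_val_add_one (by omega) fun i hi j hj => (hcyc i hi j hj).2)
  have hko : Odd k := Nat.not_even_iff_odd.1 fun hke => hσ.not_isPrime_of_even h3 hk3 hke hc.1
  obtain rfl : k = p := by
    refine hkp.eq_or_lt.resolve_right fun hlt => ?_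
    have hk : k ∈ range p := mem_range.2 hlt
    rw [← hσ.image_univ_eq_of_isPrime h3 hk3 hc.1 hko] at hk
    obtain ⟨a, -, ha⟩ := mem_image.1 hk
    exact a.val_lt.ne ha
  exact ⟨hko, rfl, edges_eq_c3Edges_arcT h3 hσ hk3 hko hc.1.edges_nonempty⟩
end
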